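/- arXiv:math/9901148 — 3 statements merged into one kernel-verified Lean document; each statement's English description precedes it below -/
import Mathlib

section
/- Let G be a graph, V_1 and V_2 nonempty vertex subsets, Γ_G(V_1,V_2) the family of paths joining them, and Γ*_G(V_1,V_2) the family of vertex sets separating V_1 from V_2. Then the vertex moduli satisfy the duality MOD(Γ*_G(V_1,V_2)) = 1/MOD(Γ_G(V_1,V_2)), i.e., MOD(Γ*) = VEL(V_1, V_2). -/
open ENNReal

variable {V : Type*}

/-- The area of a vertex metric `η`. -/
noncomputable def vArea (η : V → NNReal) : ℝ≥0∞ := ∑' v, (η v : ℝ≥0∞) ^ 2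

/-- A vertex metric is admissible for a family `Γ` of vertex curves if every
curve has `η`-length at least `1`. -/
def Admissible (Γ : Set (Set V)) (η : V → NNReal) : Prop :=
  ∀ γ ∈ Γ, 1 ≤ ∑' v : γ, (η v : ℝ≥0∞)

/-- The vertex modulus of a family of vertex curves. -/
noncomputable def MOD (Γ : Set (Set V)) : ℝ≥0∞ :=
  ⨅ (η : V → NNReal) (_ : Admissible Γ η), vArea η

/-- The family of (vertex sets of) paths in `G` joining `A` and `B`. -/
def pathsBetween (G : SimpleGraph V) (A B : Set V) : Set (Set V) :=
  {S | ∃ (u v : V) (w : G.Walk u v), u ∈ A ∧ v ∈ B ∧ S = {x | x ∈ w.support}}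

/-- The family of vertex sets separating `A` from `B`: sets meeting every path
from `A` to `B`. -/
def separating (G : SimpleGraph V) (A B : Set V) : Set (Set V) :=
  {S | ∀ γ ∈ pathsBetween G A B, (γ ∩ S).Nonempty}

/-! ### Auxiliary material -/

/-- The blocker of a family of sets. -/
def blocker (Γ : Set (Set V)) : Set (Set V) := {S | ∀ γ ∈ Γ, (γ ∩ S).Nonempty}

lemma separating_eq_blocker (G : SimpleGraph V) (A B : Set V) :
    separating G A B = blocker (pathsBetween G A B) := rfl

lemma MOD_mono {Γ₁ Γ₂ : Set (Set V)} (h : Γ₁ ⊆ Γ₂) : MOD Γ₁ ≤ MOD Γ₂ := by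
  refine le_iInf₂ fun η hη => iInf₂_le η fun γ hγ => hη γ (h hγ)

lemma pathsBetween_finite {G : SimpleGraph V} {A B : Set V} {γ : Set V}
    (h : γ ∈ pathsBetween G A B) : γ.Finite := by
  obtain ⟨u, v, w, -, -, rfl⟩ := h
  exact (w.support.finite_toSet).subset (fun x hx => hx)

lemma pathsBetween_nonempty {G : SimpleGraph V} {A B : Set V} {γ : Set V}
    (h : γ ∈ pathsBetween G A B) : γ.Nonempty := by
  obtain ⟨u, v, w, -, -, rfl⟩ := h
  exact ⟨u, w.start_mem_support⟩

/-- tsum over a finite set as a finset sum. -/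
lemma MOD_def (Γ : Set (Set V)) : MOD Γ = ⨅ (η : V → NNReal) (_ : Admissible Γ η), vArea η :=
  rfl

lemma tsum_set_finite {γ : Set V} (h : γ.Finite) (f : V → ℝ≥0∞) :
    ∑' v : γ, f v = ∑ v ∈ h.toFinset, f v := by
  rw [tsum_subtype]
  rw [tsum_eq_sum (s := h.toFinset) (fun v hv => Set.indicator_of_notMem (by simpa using hv) f)]
  exact Finset.sum_congr rfl fun v hv => Set.indicator_of_mem (by simpa using hv) f

lemma finite_duality (Γ₀ : Set (Set V)) (hfin : Γ₀.Finite) (hγ : ∀ γ ∈ Γ₀, γ.Finite)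
    (hne : ∀ γ ∈ Γ₀, γ.Nonempty) : MOD (blocker Γ₀) ≤ (MOD Γ₀)⁻¹ := by
  classical
  rcases Γ₀.eq_empty_or_nonempty with rfl | hΓne
  · have hadm : Admissible (∅ : Set (Set V)) (fun _ => 0) :=
      fun γ hγ' => absurd hγ' (Set.notMem_empty γ)
    have h1 : MOD (∅ : Set (Set V)) ≤ vArea (fun _ : V => (0 : NNReal)) :=
      iInf₂_le _ hadm
    have h0 : MOD (∅ : Set (Set V)) = 0 := by
      refine le_antisymm (h1.trans ?_) zero_le
      simp [vArea]
    rw [h0, ENNReal.inv_zero]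
    exact le_top
  have hUfin : (⋃ γ ∈ Γ₀, γ).Finite := Set.Finite.biUnion hfin hγ
  set V₀ : Finset V := hUfin.toFinset with hV₀
  have hmemV₀ : ∀ {γ : Set V}, γ ∈ Γ₀ → ∀ {v : V}, v ∈ γ → v ∈ V₀ := by
    intro γ hγ' v hv
    simp only [hV₀, Set.Finite.mem_toFinset]
    exact Set.mem_biUnion hγ' hv
  set T : Set V → Finset ↥V₀ := fun γ => Finset.univ.filter (fun i => (i : V) ∈ γ) with hT
  set Q : (↥V₀ → ℝ) → ℝ := fun x => ∑ i, x i ^ 2 with hQ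
  set K : Set (↥V₀ → ℝ) :=
    {x | (∀ i, 0 ≤ x i ∧ x i ≤ 1) ∧ ∀ γ ∈ Γ₀, 1 ≤ ∑ i ∈ T γ, x i} with hK
  -- K is compact
  have hKclosed : IsClosed K := by
    have : K = (⋂ i, {x : ↥V₀ → ℝ | 0 ≤ x i ∧ x i ≤ 1}) ∩
        (⋂ γ ∈ Γ₀, {x : ↥V₀ → ℝ | 1 ≤ ∑ i ∈ T γ, x i}) := by
      ext x
      simp [hK, Set.mem_iInter, forall_and]
    rw [this]
    refine IsClosed.inter (isClosed_iInter fun i => ?_) (isClosed_biInter fun γ _ => ?_)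
    · exact IsClosed.inter (isClosed_le continuous_const (continuous_apply i))
        (isClosed_le (continuous_apply i) continuous_const)
    · exact isClosed_le continuous_const (continuous_finset_sum _ fun i _ => continuous_apply i)
  have hKbdd : Bornology.IsBounded K := by
    refine Bornology.IsBounded.subset (Metric.isBounded_closedBall (x := (0 : ↥V₀ → ℝ)) (r := 1)) ?_
    intro x hx
    rw [Metric.mem_closedBall, dist_zero_right]
    refine (pi_norm_le_iff_of_nonneg zero_le_one).2 fun i => ?_
    rw [Real.norm_eq_abs, abs_le]
    exact ⟨by linarith [(hx.1 i).1], (hx.1 i).2⟩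
  have hKcomp : IsCompact K := Metric.isCompact_of_isClosed_isBounded hKclosed hKbdd
  have hKne : K.Nonempty := by
    refine ⟨fun _ => 1, fun i => ⟨zero_le_one, le_refl 1⟩, fun γ hγ' => ?_⟩
    rw [Finset.sum_const, nsmul_eq_mul, mul_one]
    have hTne : (T γ).Nonempty := by
      obtain ⟨v, hv⟩ := hne γ hγ'
      exact ⟨⟨v, hmemV₀ hγ' hv⟩, by simp [hT, hv]⟩
    exact_mod_cast Nat.one_le_cast.2 (Finset.card_pos.2 hTne)
  obtain ⟨x₀, hx₀K, hmin⟩ := hKcomp.exists_isMinOn hKne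
    (Continuous.continuousOn (continuous_finset_sum _ fun i _ => (continuous_apply i).pow 2))
  set M₀ : ℝ := Q x₀ with hM₀
  have hM₀nonneg : 0 ≤ M₀ := Finset.sum_nonneg fun i _ => sq_nonneg _
  have hM₀pos : 0 < M₀ := by
    rcases lt_or_eq_of_le hM₀nonneg with h | h
    · exact h
    · exfalso
      have hzero : ∀ i, x₀ i = 0 := by
        intro i
        have := (Finset.sum_eq_zero_iff_of_nonneg (fun i _ => sq_nonneg (x₀ i))).1 h.symm i
          (Finset.mem_univ i)
        exact pow_eq_zero_iff (n := 2) (by norm_num) |>.1 this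
      obtain ⟨γ', hγ'⟩ := hΓne
      have := hx₀K.2 γ' hγ'
      rw [Finset.sum_congr rfl (fun i _ => hzero i), Finset.sum_const, smul_zero] at this
      linarith
  -- variational inequality
  have hvar : ∀ μ ∈ K, M₀ ≤ ∑ i, x₀ i * μ i := by
    intro μ hμ
    by_contra hcon
    push_neg at hcon
    set c : ℝ := ∑ i, x₀ i * μ i - M₀ with hc
    have hc0 : c < 0 := by simp only [hc]; linarith
    set D : ℝ := ∑ i, (μ i - x₀ i) ^ 2 with hD
    have hD0 : 0 ≤ D := Finset.sum_nonneg fun i _ => sq_nonneg _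
    set t : ℝ := min 1 (-c / (D + 1)) with ht
    have ht0 : 0 < t := lt_min one_pos (div_pos (neg_pos.2 hc0) (by linarith))
    have ht1 : t ≤ 1 := min_le_left _ _
    set y : ↥V₀ → ℝ := fun i => x₀ i + t * (μ i - x₀ i) with hy
    have hyK : y ∈ K := by
      refine ⟨fun i => ?_, fun γ hγ' => ?_⟩
      · obtain ⟨h1, h2⟩ := hx₀K.1 i
        obtain ⟨h3, h4⟩ := hμ.1 i
        have hy_i : y i = (1 - t) * x₀ i + t * μ i := by simp only [hy]; ring
        rw [hy_i]
        constructor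
        · have := mul_nonneg (sub_nonneg.2 ht1) h1
          have := mul_nonneg ht0.le h3
          linarith
        · have := mul_le_mul_of_nonneg_left h2 (sub_nonneg.2 ht1)
          have := mul_le_mul_of_nonneg_left h4 ht0.le
          linarith
      · have h1 := hx₀K.2 γ hγ'
        have h2 := hμ.2 γ hγ'
        have hsum : ∑ i ∈ T γ, y i
            = (1 - t) * (∑ i ∈ T γ, x₀ i) + t * ∑ i ∈ T γ, μ i := by
          rw [Finset.mul_sum, Finset.mul_sum, ← Finset.sum_add_distrib]
          exact Finset.sum_congr rfl fun i _ => by simp only [hy]; ring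
        rw [hsum]
        have := mul_le_mul_of_nonneg_left h1 (sub_nonneg.2 ht1)
        have := mul_le_mul_of_nonneg_left h2 ht0.le
        linarith
    have hQy : Q x₀ ≤ Q y := isMinOn_iff.mp hmin _ hyK
    have hexp : Q y = M₀ + 2 * t * c + t ^ 2 * D := by
      have e1 : Q y = ∑ i, (x₀ i ^ 2 + (2 * t) * (x₀ i * μ i - x₀ i ^ 2)
          + t ^ 2 * (μ i - x₀ i) ^ 2) := by
        rw [hQ]
        exact Finset.sum_congr rfl fun i _ => by simp only [hy]; ring
      rw [e1, Finset.sum_add_distrib, Finset.sum_add_distrib, ← Finset.mul_sum, ← Finset.mul_sum,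
        Finset.sum_sub_distrib]
    have h5 : t * (D + 1) ≤ -c := by
      have h6 : t ≤ -c / (D + 1) := min_le_right _ _
      rw [le_div_iff₀ (by linarith : (0:ℝ) < D + 1)] at h6
      exact h6
    have h7 : t * D ≤ -c := by nlinarith
    have h8 : t ^ 2 * D ≤ t * (-c) := by
      have := mul_le_mul_of_nonneg_left h7 ht0.le
      nlinarith
    have h9 : t * c < 0 := mul_neg_of_pos_of_neg ht0 hc0
    have h10 : Q y - Q x₀ = 2 * t * c + t ^ 2 * D := by rw [hexp, ← hM₀]; ring
    nlinarith
  -- extension of x₀ to V and translation lemmas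
  set xe : V → ℝ := fun v => if h : v ∈ V₀ then x₀ ⟨v, h⟩ else 0 with hxe
  have hxe0 : ∀ v, 0 ≤ xe v := by
    intro v
    simp only [hxe]
    split
    · exact (hx₀K.1 _).1
    · exact le_refl 0
  have hxe_out : ∀ v ∉ V₀, xe v = 0 := by
    intro v hv; simp only [hxe, dif_neg hv]
  have hsum_tr : ∀ (P : V → Prop) (_ : DecidablePred P),
      ∑ i ∈ Finset.univ.filter (fun i : ↥V₀ => P ↑i), x₀ i = ∑ v ∈ V₀.filter P, xe v := by
    intro P hP
    rw [Finset.sum_filter, Finset.sum_filter, Finset.univ_eq_attach,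
      ← Finset.sum_attach V₀ (fun v => if P v then xe v else 0)]
    refine Finset.sum_congr rfl fun i _ => ?_
    by_cases h : P ↑i <;> simp [h, hxe, i.2]
  have hQxe : ∑ v ∈ V₀, xe v ^ 2 = M₀ := by
    rw [hM₀, hQ, Finset.univ_eq_attach, ← Finset.sum_attach V₀ (fun v => xe v ^ 2)]
    refine Finset.sum_congr rfl fun i _ => ?_
    simp [hxe, i.2]
  have hfilter_γ : ∀ γ (hγ' : γ ∈ Γ₀), V₀.filter (· ∈ γ) = (hγ γ hγ').toFinset := by
    intro γ hγ'
    ext v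
    simp only [Finset.mem_filter, Set.Finite.mem_toFinset]
    exact ⟨fun h => h.2, fun h => ⟨hmemV₀ hγ' h, h⟩⟩
  -- the admissible metric for Γ₀
  set η₀ : V → NNReal := fun v => Real.toNNReal (xe v) with hη₀
  have hη₀cast : ∀ v, ((η₀ v : ℝ≥0∞)) = ENNReal.ofReal (xe v) := fun v => rfl
  have hadm₀ : Admissible Γ₀ η₀ := by
    intro γ hγ'
    rw [tsum_set_finite (hγ γ hγ') (fun v => (η₀ v : ℝ≥0∞))]
    have h1 : (1:ℝ) ≤ ∑ v ∈ (hγ γ hγ').toFinset, xe v := by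
      rw [← hfilter_γ γ hγ', ← hsum_tr (· ∈ γ) _]
      exact hx₀K.2 γ hγ'
    calc (1:ℝ≥0∞) = ENNReal.ofReal 1 := by simp
    _ ≤ ENNReal.ofReal (∑ v ∈ (hγ γ hγ').toFinset, xe v) := ENNReal.ofReal_le_ofReal h1
    _ = ∑ v ∈ (hγ γ hγ').toFinset, ENNReal.ofReal (xe v) :=
        ENNReal.ofReal_sum_of_nonneg (fun v _ => hxe0 v)
    _ = ∑ v ∈ (hγ γ hγ').toFinset, (η₀ v : ℝ≥0∞) := rfl
  have hvA₀ : vArea η₀ = ENNReal.ofReal M₀ := by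
    rw [vArea]
    rw [tsum_eq_sum (s := V₀) (f := fun v => (η₀ v : ℝ≥0∞) ^ 2)
      (fun v hv => by simp [hη₀, hxe_out v hv])]
    calc ∑ v ∈ V₀, (η₀ v : ℝ≥0∞) ^ 2
        = ∑ v ∈ V₀, ENNReal.ofReal (xe v ^ 2) := by
          refine Finset.sum_congr rfl fun v _ => ?_
          rw [hη₀cast, ← ENNReal.ofReal_pow (hxe0 v)]
    _ = ENNReal.ofReal (∑ v ∈ V₀, xe v ^ 2) :=
        (ENNReal.ofReal_sum_of_nonneg (fun v _ => sq_nonneg _)).symm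
    _ = ENNReal.ofReal M₀ := by rw [hQxe]
  have hMOD₀ : MOD Γ₀ ≤ ENNReal.ofReal M₀ := le_trans (iInf₂_le η₀ hadm₀) (le_of_eq hvA₀)
  -- the admissible metric for the blocker
  set ηs : V → NNReal := fun v => Real.toNNReal (xe v / M₀) with hηs
  have hηscast : ∀ v, ((ηs v : ℝ≥0∞)) = ENNReal.ofReal (xe v / M₀) := fun v => rfl
  have hadms : Admissible (blocker Γ₀) ηs := by
    intro S hS
    have hμS : (fun i : ↥V₀ => if (i : V) ∈ S then (1:ℝ) else 0) ∈ K := by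
      refine ⟨fun i => ?_, fun γ hγ' => ?_⟩
      · constructor
        · by_cases h : (i : V) ∈ S <;> simp [h]
        · by_cases h : (i : V) ∈ S <;> simp [h]
      · obtain ⟨v, hvγ, hvS⟩ := hS γ hγ'
        have hvV₀ : v ∈ V₀ := hmemV₀ hγ' hvγ
        have hmem : (⟨v, hvV₀⟩ : ↥V₀) ∈ T γ := by simp [hT, hvγ]
        have hle := Finset.single_le_sum (f := fun i : ↥V₀ => if (i : V) ∈ S then (1:ℝ) else 0)
          (fun i _ => by by_cases h : (i : V) ∈ S <;> simp [h]) hmem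
        simpa [hvS] using hle
    have h1 := hvar _ hμS
    have h2 : M₀ ≤ ∑ v ∈ V₀.filter (· ∈ S), xe v := by
      rw [← hsum_tr (· ∈ S) _]
      calc M₀ ≤ ∑ i, x₀ i * (if (i : V) ∈ S then (1:ℝ) else 0) := h1
      _ = ∑ i ∈ Finset.univ.filter (fun i : ↥V₀ => (i : V) ∈ S), x₀ i := by
          rw [Finset.sum_filter]
          exact Finset.sum_congr rfl fun i _ => by by_cases h : (i : V) ∈ S <;> simp [h]
    have h3 : ∑ v ∈ V₀.filter (· ∈ S), (ηs v : ℝ≥0∞) ≤ ∑' (v : S), (ηs v : ℝ≥0∞) := by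
      rw [tsum_subtype S (fun v => ((ηs v : NNReal) : ℝ≥0∞))]
      refine le_trans (le_of_eq ?_) (ENNReal.sum_le_tsum (V₀.filter (· ∈ S)))
      refine Finset.sum_congr rfl fun v hv => ?_
      rw [Set.indicator_of_mem (Finset.mem_filter.1 hv).2]
    refine le_trans ?_ h3
    have e0 : (1:ℝ≥0∞) = ENNReal.ofReal (M₀ / M₀) := by
      rw [div_self (ne_of_gt hM₀pos)]
      simp
    have e1 : ENNReal.ofReal (M₀ / M₀)
        ≤ ENNReal.ofReal ((∑ v ∈ V₀.filter (· ∈ S), xe v) / M₀) := by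
      apply ENNReal.ofReal_le_ofReal
      gcongr
    have e2 : ENNReal.ofReal ((∑ v ∈ V₀.filter (· ∈ S), xe v) / M₀)
        = ∑ v ∈ V₀.filter (· ∈ S), ENNReal.ofReal (xe v / M₀) := by
      rw [Finset.sum_div]
      exact ENNReal.ofReal_sum_of_nonneg fun v _ => div_nonneg (hxe0 v) hM₀nonneg
    rw [e0]
    refine le_trans e1 (le_of_eq ?_)
    rw [e2]
    exact Finset.sum_congr rfl fun v _ => (hηscast v).symm
  have hvAs : vArea ηs = ENNReal.ofReal (1 / M₀) := by
    rw [vArea]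
    rw [tsum_eq_sum (s := V₀) (f := fun v => (ηs v : ℝ≥0∞) ^ 2)
      (fun v hv => by simp [hηs, hxe_out v hv])]
    calc ∑ v ∈ V₀, (ηs v : ℝ≥0∞) ^ 2
        = ∑ v ∈ V₀, ENNReal.ofReal ((xe v / M₀) ^ 2) := by
          refine Finset.sum_congr rfl fun v _ => ?_
          rw [hηscast, ← ENNReal.ofReal_pow (div_nonneg (hxe0 v) hM₀nonneg)]
    _ = ENNReal.ofReal (∑ v ∈ V₀, (xe v / M₀) ^ 2) :=
        (ENNReal.ofReal_sum_of_nonneg (fun v _ => sq_nonneg _)).symm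
    _ = ENNReal.ofReal (1 / M₀) := by
        congr 1
        have hsq : ∑ v ∈ V₀, (xe v / M₀) ^ 2 = (∑ v ∈ V₀, xe v ^ 2) / M₀ ^ 2 := by
          rw [Finset.sum_div]
          exact Finset.sum_congr rfl fun v _ => by rw [div_pow]
        rw [hsq, hQxe]
        field_simp
  calc MOD (blocker Γ₀) ≤ vArea ηs := iInf₂_le ηs hadms
  _ = ENNReal.ofReal (1 / M₀) := hvAs
  _ = (ENNReal.ofReal M₀)⁻¹ := by rw [one_div, ← ENNReal.ofReal_inv_of_pos hM₀pos]
  _ ≤ (MOD Γ₀)⁻¹ := ENNReal.inv_le_inv' hMOD₀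

lemma MOD_eq_iSup (Γ : Set (Set V)) (hγ : ∀ γ ∈ Γ, γ.Finite) :
    MOD Γ = ⨆ (Γ₀ : Set (Set V)) (_ : Γ₀ ⊆ Γ) (_ : Γ₀.Finite), MOD Γ₀ := by
  classical
  refine le_antisymm ?_ (iSup₂_le fun Γ₀ h1 => iSup_le fun h2 => MOD_mono h1)
  set M' : ℝ≥0∞ := ⨆ (Γ₀ : Set (Set V)) (_ : Γ₀ ⊆ Γ) (_ : Γ₀.Finite), MOD Γ₀ with hM'
  refine ENNReal.le_of_forall_pos_le_add fun ε hε hM'lt => ?_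
  have hM'ne : M' ≠ ⊤ := hM'lt.ne
  have hne' : M' + ε ≠ ⊤ := ENNReal.add_ne_top.2 ⟨hM'ne, ENNReal.coe_ne_top⟩
  have hMlt : M' < M' + ε := ENNReal.lt_add_right hM'ne (by exact_mod_cast hε.ne')
  have hchoice : ∀ F : Finset {γ // γ ∈ Γ}, ∃ η : V → NNReal,
      Admissible (Subtype.val '' (↑F : Set {γ // γ ∈ Γ})) η ∧ vArea η < M' + ε := by
    intro F
    have hsub : Subtype.val '' (↑F : Set {γ // γ ∈ Γ}) ⊆ Γ := by
      rintro γ ⟨⟨γ', hγ'⟩, -, rfl⟩; exact hγ'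
    have hfinF : (Subtype.val '' (↑F : Set {γ // γ ∈ Γ})).Finite := F.finite_toSet.image _
    have hleM' : MOD (Subtype.val '' (↑F : Set {γ // γ ∈ Γ})) ≤ M' := by
      rw [hM']
      exact le_iSup₂_of_le _ hsub (le_iSup_of_le hfinF le_rfl)
    have hlt2 := lt_of_le_of_lt hleM' hMlt
    rw [ MOD_def ] at hlt2
    obtain ⟨η, hη⟩ := iInf_lt_iff.mp hlt2
    obtain ⟨hadm, hlt3⟩ := iInf_lt_iff.mp hη
    exact ⟨η, hadm, hlt3⟩
  set ηF : Finset {γ // γ ∈ Γ} → V → NNReal := fun F => (hchoice F).choose with hηF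
  have hadmF : ∀ F : Finset {γ // γ ∈ Γ}, Admissible (Subtype.val '' (↑F : Set {γ // γ ∈ Γ})) (ηF F) :=
    fun F => (hchoice F).choose_spec.1
  have hareaF : ∀ F, vArea (ηF F) < M' + ε := fun F => (hchoice F).choose_spec.2
  set C : NNReal := NNReal.sqrt (M' + ε).toNNReal with hC
  have hbound : ∀ F v, ηF F v ≤ C := by
    intro F v
    have h1 : ((ηF F v : ℝ≥0∞)) ^ 2 ≤ M' + ε := by
      refine le_trans ?_ (hareaF F).le
      exact ENNReal.le_tsum v
    have h2 : ((ηF F v) ^ 2 : NNReal) ≤ (M' + ε).toNNReal := by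
      rw [← ENNReal.coe_le_coe, ENNReal.coe_toNNReal hne']
      push_cast
      exact h1
    calc ηF F v = NNReal.sqrt ((ηF F v) ^ 2) := (NNReal.sqrt_sq _).symm
    _ ≤ C := NNReal.sqrt_le_sqrt.2 h2
  set U : Ultrafilter (Finset {γ // γ ∈ Γ}) := Ultrafilter.of Filter.atTop with hU
  have hUle : (U : Filter (Finset {γ // γ ∈ Γ})) ≤ Filter.atTop := Ultrafilter.of_le _
  have hconv : ∀ v : V, ∃ x : NNReal,
      Filter.Tendsto (fun F => ηF F v) (U : Filter (Finset {γ // γ ∈ Γ})) (nhds x) := by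
    intro v
    have hcomp : IsCompact (Set.Icc (0 : NNReal) C) := isCompact_Icc
    have hmem : Set.Icc (0 : NNReal) C ∈ Ultrafilter.map (fun F => ηF F v) U := by
      rw [Ultrafilter.mem_map]
      refine Filter.mem_of_superset Filter.univ_mem ?_
      intro F _
      exact ⟨zero_le, hbound F v⟩
    obtain ⟨x, -, hxle⟩ := hcomp.ultrafilter_le_nhds (Ultrafilter.map (fun F => ηF F v) U) (Filter.le_principal_iff.2 hmem)
    refine ⟨x, ?_⟩
    rw [Filter.Tendsto, ← Ultrafilter.coe_map]
    exact hxle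
  choose η hηtend using hconv
  have hadm : Admissible Γ η := by
    intro γ hγmem
    rw [tsum_set_finite (hγ γ hγmem) (fun v => ((η v : NNReal) : ℝ≥0∞))]
    have htends : Filter.Tendsto (fun F => ∑ v ∈ (hγ γ hγmem).toFinset, ηF F v)
        (U : Filter (Finset {γ' // γ' ∈ Γ})) (nhds (∑ v ∈ (hγ γ hγmem).toFinset, η v)) :=
      tendsto_finset_sum _ (fun v _ => hηtend v)
    have hev : ∀ᶠ F in (U : Filter (Finset {γ' // γ' ∈ Γ})),
        (1 : NNReal) ≤ ∑ v ∈ (hγ γ hγmem).toFinset, ηF F v := by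
      have hev0 : ∀ᶠ F in (Filter.atTop : Filter (Finset {γ' // γ' ∈ Γ})),
          ({⟨γ, hγmem⟩} : Finset {γ' // γ' ∈ Γ}) ≤ F := Filter.eventually_ge_atTop _
      refine (hev0.filter_mono hUle).mono ?_
      intro F hF
      have hγF : γ ∈ Subtype.val '' (↑F : Set {γ' // γ' ∈ Γ}) :=
        ⟨⟨γ, hγmem⟩, hF (Finset.mem_singleton_self _), rfl⟩
      have h1 := hadmF F γ hγF
      rw [tsum_set_finite (hγ γ hγmem) (fun v => ((ηF F v : NNReal) : ℝ≥0∞))] at h1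
      have h2 : ((1 : NNReal) : ℝ≥0∞) ≤ ((∑ v ∈ (hγ γ hγmem).toFinset, ηF F v : NNReal) : ℝ≥0∞) := by
        push_cast
        exact h1
      exact_mod_cast h2
    have h1 : (1 : NNReal) ≤ ∑ v ∈ (hγ γ hγmem).toFinset, η v := ge_of_tendsto htends hev
    have h2 : ((1 : NNReal) : ℝ≥0∞) ≤ ((∑ v ∈ (hγ γ hγmem).toFinset, η v : NNReal) : ℝ≥0∞) :=
      ENNReal.coe_le_coe.2 h1
    calc (1 : ℝ≥0∞) ≤ ((∑ v ∈ (hγ γ hγmem).toFinset, η v : NNReal) : ℝ≥0∞) := by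
          exact_mod_cast h2
    _ = ∑ v ∈ (hγ γ hγmem).toFinset, ((η v : ℝ≥0∞)) := by push_cast; rfl
  have harea : vArea η ≤ M' + ε := by
    rw [vArea, ENNReal.tsum_eq_iSup_sum]
    refine iSup_le fun s => ?_
    have hlim : Filter.Tendsto (fun F => ∑ v ∈ s, (ηF F v) ^ 2)
        (U : Filter (Finset {γ' // γ' ∈ Γ})) (nhds (∑ v ∈ s, (η v) ^ 2)) :=
      tendsto_finset_sum _ (fun v _ => (hηtend v).pow 2)
    have hband : ∀ F, ∑ v ∈ s, (ηF F v) ^ 2 ≤ (M' + ε).toNNReal := by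
      intro F
      have h1 : ((∑ v ∈ s, (ηF F v) ^ 2 : NNReal) : ℝ≥0∞) ≤ M' + ε := by
        push_cast
        refine le_trans ?_ (hareaF F).le
        exact ENNReal.sum_le_tsum s
      rw [← ENNReal.coe_le_coe, ENNReal.coe_toNNReal hne'] at *
      exact h1
    have h2 : ∑ v ∈ s, (η v) ^ 2 ≤ (M' + ε).toNNReal :=
      le_of_tendsto hlim (Filter.Eventually.of_forall hband)
    calc ∑ v ∈ s, ((η v : ℝ≥0∞)) ^ 2 = ((∑ v ∈ s, (η v) ^ 2 : NNReal) : ℝ≥0∞) := by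
          push_cast; rfl
    _ ≤ M' + ε := by
          rw [← ENNReal.coe_toNNReal hne']
          exact_mod_cast h2
  exact le_trans (iInf₂_le η hadm) harea

lemma list_toFinset_sum_le [DecidableEq V] {l : List V} (f : V → ℝ≥0∞) :
    ∑ x ∈ l.toFinset, f x ≤ (l.map f).sum := by
  induction l with
  | nil => simp
  | cons a l ih =>
    rw [List.toFinset_cons, List.map_cons, List.sum_cons]
    by_cases h : a ∈ l.toFinset
    · rw [Finset.insert_eq_self.2 h]
      exact le_trans ih le_add_self
    · rw [Finset.sum_insert h]
      exact add_le_add le_rfl ih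

lemma pairing (G : SimpleGraph V) (A B : Set V) {lam ρ : V → NNReal}
    (hlam : Admissible (pathsBetween G A B) lam)
    (hρ : Admissible (separating G A B) ρ) : (vArea lam)⁻¹ ≤ vArea ρ := by
  classical
  by_cases hP : (pathsBetween G A B) = ∅
  · exfalso
    have hsep : (∅ : Set V) ∈ separating G A B := by
      intro γ hγ'
      rw [hP] at hγ'
      exact absurd hγ' (Set.notMem_empty γ)
    simpa using hρ ∅ hsep
  -- distance function
  set wl : ∀ (u x : V), G.Walk u x → ℝ≥0∞ :=
    fun u x w => (w.support.map (fun y => (lam y : ℝ≥0∞))).sum with hwl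
  set d : V → ℝ≥0∞ :=
    fun x => ⨅ (u : V) (_ : u ∈ A) (w : G.Walk u x), wl u x w with hd
  have hd_le : ∀ {u x : V}, u ∈ A → ∀ (w : G.Walk u x), d x ≤ wl u x w := by
    intro u x hu w
    exact iInf_le_of_le u (iInf_le_of_le hu (iInf_le _ w))
  have hdA : ∀ u ∈ A, d u ≤ (lam u : ℝ≥0∞) := by
    intro u hu
    have := hd_le hu (SimpleGraph.Walk.nil' u)
    simpa [hwl] using this
  -- tsum over support set vs list sum
  have hsupp_le : ∀ {u x : V} (w : G.Walk u x),
      (∑' y : ({z | z ∈ w.support} : Set V), (lam y : ℝ≥0∞)) ≤ wl u x w := by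
    intro u x w
    have hfin : ({z | z ∈ w.support} : Set V).Finite :=
      w.support.finite_toSet.subset (fun z hz => hz)
    rw [tsum_set_finite hfin (fun y => (lam y : ℝ≥0∞))]
    have he : hfin.toFinset = w.support.toFinset := by
      ext z
      simp
    rw [he]
    exact list_toFinset_sum_le _
  have hdB : ∀ v ∈ B, (1 : ℝ≥0∞) ≤ d v := by
    intro v hv
    refine le_iInf fun u => le_iInf fun hu => le_iInf fun w => ?_
    have hγ : ({z | z ∈ w.support} : Set V) ∈ pathsBetween G A B := ⟨u, v, w, hu, hv, rfl⟩
    exact le_trans (hlam _ hγ) (hsupp_le w)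
  -- step inequality
  have hstep : ∀ {y x : V}, G.Adj y x → d x ≤ d y + (lam x : ℝ≥0∞) := by
    intro y x hadj
    by_cases hdy : d y = ⊤
    · rw [hdy, top_add]
      exact le_top
    refine ENNReal.le_of_forall_pos_le_add fun ε hε _ => ?_
    have hlt : d y < d y + ε := ENNReal.lt_add_right hdy (by exact_mod_cast hε.ne')
    rw [hd] at hlt
    obtain ⟨u, hu⟩ := iInf_lt_iff.mp hlt
    obtain ⟨huA, hu2⟩ := iInf_lt_iff.mp hu
    obtain ⟨w, hw⟩ := iInf_lt_iff.mp hu2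
    have hconcat : wl u x (w.concat hadj) = wl u y w + (lam x : ℝ≥0∞) := by
      simp only [hwl, SimpleGraph.Walk.support_concat, List.concat_eq_append, List.map_append,
        List.sum_append, List.map_cons, List.map_nil, List.sum_cons, List.sum_nil, add_zero]
    calc d x ≤ wl u x (w.concat hadj) := hd_le huA _
    _ = wl u y w + (lam x : ℝ≥0∞) := hconcat
    _ ≤ (d y + ε) + (lam x : ℝ≥0∞) := add_le_add hw.le le_rfl
    _ = (d y + (lam x : ℝ≥0∞)) + ε := by ring
  -- level sets
  set Sep : ℝ≥0∞ → Set V := fun t => {v | d v - (lam v : ℝ≥0∞) < t ∧ t ≤ d v} with hSep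
  have hsep_mem : ∀ t : ℝ≥0∞, 0 < t → t ≤ 1 → Sep t ∈ separating G A B := by
    intro t ht0 ht1 γ hγ'
    obtain ⟨u, v, w, huA, hvB, rfl⟩ := hγ'
    have hkey : ∀ {a b : V} (w' : G.Walk a b), d a - (lam a : ℝ≥0∞) < t → t ≤ d b →
        ∃ x ∈ w'.support, x ∈ Sep t := by
      intro a b w'
      induction w' with
      | nil =>
        intro h1 h2
        exact ⟨_, SimpleGraph.Walk.start_mem_support _, h1, h2⟩
      | @cons a a' b hadj w'' ih =>
        intro h1 h2
        by_cases hcase : t ≤ d a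
        · exact ⟨a, SimpleGraph.Walk.start_mem_support _, h1, hcase⟩
        · push_neg at hcase
          have h3 : d a' - (lam a' : ℝ≥0∞) < t :=
            lt_of_le_of_lt (tsub_le_iff_right.2 (hstep hadj)) hcase
          obtain ⟨x, hx1, hx2⟩ := ih h3 h2
          refine ⟨x, ?_, hx2⟩
          rw [SimpleGraph.Walk.support_cons]
          exact List.mem_cons_of_mem _ hx1
    have h1 : d u - (lam u : ℝ≥0∞) < t := by
      have : d u - (lam u : ℝ≥0∞) = 0 := tsub_eq_zero_iff_le.2 (hdA u huA)
      rw [this]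
      exact ht0
    obtain ⟨x, hx1, hx2⟩ := hkey w h1 (le_trans ht1 (hdB v hvB))
    exact ⟨x, hx1, hx2⟩
  have hSeplam : ∀ (t : ℝ≥0∞) (x : V), 0 < t → x ∈ Sep t → lam x ≠ 0 := by
    intro t x ht0 hx
    intro h0
    obtain ⟨h1, h2⟩ := hx
    rw [h0] at h1
    simp only [ENNReal.coe_zero, tsub_zero] at h1
    exact absurd (lt_of_le_of_lt h2 h1) (lt_irrefl t)
  -- coarea estimate for a single vertex
  have hIv_meas : ∀ v : V, MeasurableSet {s : ℝ | v ∈ Sep (ENNReal.ofReal s)} := by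
    intro v
    have : {s : ℝ | v ∈ Sep (ENNReal.ofReal s)}
        = ENNReal.ofReal ⁻¹' Set.Ioc (d v - (lam v : ℝ≥0∞)) (d v) := by
      ext s
      simp [hSep, Set.mem_Ioc]
    rw [this]
    exact ENNReal.measurable_ofReal measurableSet_Ioc
  have hIv_vol : ∀ v : V,
      (MeasureTheory.volume ({s : ℝ | v ∈ Sep (ENNReal.ofReal s)} ∩ Set.Ioc (0:ℝ) 1))
        ≤ (lam v : ℝ≥0∞) := by
    intro v
    by_cases hdv : d v = ⊤
    · have : {s : ℝ | v ∈ Sep (ENNReal.ofReal s)} = ∅ := by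
        ext s
        simp only [hSep, Set.mem_setOf_eq, Set.mem_empty_iff_false, iff_false, not_and]
        intro h1
        exfalso
        rw [hdv, ENNReal.top_sub_coe] at h1
        exact absurd h1 not_top_lt
      rw [this, Set.empty_inter]
      simp
    · have hsub : {s : ℝ | v ∈ Sep (ENNReal.ofReal s)} ∩ Set.Ioc (0:ℝ) 1
          ⊆ Set.Ioc ((d v - (lam v : ℝ≥0∞)).toReal) ((d v).toReal) := by
        rintro s ⟨⟨h1, h2⟩, h3, h4⟩
        constructor
        · have hne : d v - (lam v : ℝ≥0∞) ≠ ⊤ := by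
            intro hc
            rw [hc] at h1
            exact absurd h1 not_top_lt
          exact (ENNReal.lt_ofReal_iff_toReal_lt hne).1 h1
        · exact (ENNReal.ofReal_le_iff_le_toReal hdv).1 h2
      refine le_trans (MeasureTheory.measure_mono hsub) ?_
      rw [Real.volume_Ioc]
      have htr : (d v).toReal - (d v - (lam v : ℝ≥0∞)).toReal ≤ ((lam v : ℝ≥0∞)).toReal := by
        have h5 : d v ≤ (d v - (lam v : ℝ≥0∞)) + (lam v : ℝ≥0∞) := le_tsub_add
        have h6 : (d v).toReal ≤ (d v - (lam v : ℝ≥0∞)).toReal + ((lam v : ℝ≥0∞)).toReal := by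
          refine le_trans (ENNReal.toReal_mono ?_ h5) ?_
          · exact ENNReal.add_ne_top.2 ⟨ne_top_of_le_ne_top hdv tsub_le_self, ENNReal.coe_ne_top⟩
          · rw [ENNReal.toReal_add (ne_top_of_le_ne_top hdv tsub_le_self) ENNReal.coe_ne_top]
        linarith
      calc ENNReal.ofReal ((d v).toReal - (d v - (lam v : ℝ≥0∞)).toReal)
          ≤ ENNReal.ofReal (((lam v : ℝ≥0∞)).toReal) := ENNReal.ofReal_le_ofReal htr
      _ = (lam v : ℝ≥0∞) := ENNReal.ofReal_toReal ENNReal.coe_ne_top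
  -- main pairing estimate
  have key : (1 : ℝ≥0∞) ≤ ∑' v, (ρ v : ℝ≥0∞) * (lam v : ℝ≥0∞) := by
    by_cases hsum : ∑' v, (ρ v : ℝ≥0∞) * (lam v : ℝ≥0∞) = ⊤
    · rw [hsum]
      exact le_top
    have hcnt : (Function.support fun v => (ρ v : ℝ≥0∞) * (lam v : ℝ≥0∞)).Countable :=
      Summable.countable_support_ennreal hsum
    set T := Function.support fun v => (ρ v : ℝ≥0∞) * (lam v : ℝ≥0∞) with hTdef
    haveI : Countable T := hcnt.to_subtype
    set F : V → ℝ → ℝ≥0∞ := fun v s =>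
      (ρ v : ℝ≥0∞) * Set.indicator {s' : ℝ | v ∈ Sep (ENNReal.ofReal s')} (fun _ => 1) s with hF
    have hFmeas : ∀ v : V, Measurable (F v) :=
      fun v => (measurable_const.indicator (hIv_meas v)).const_mul _
    have step1 : (1 : ℝ≥0∞) ≤ ∫⁻ s in Set.Ioc (0:ℝ) 1, ∑' (v : T), F (v : V) s := by
      have hone : (1 : ℝ≥0∞) = ∫⁻ _ in Set.Ioc (0:ℝ) 1, 1 := by
        rw [MeasureTheory.setLIntegral_one, Real.volume_Ioc]
        norm_num
      rw [hone]
      refine MeasureTheory.setLIntegral_mono (Measurable.ennreal_tsum fun v => hFmeas v) ?_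
      intro s hs
      have ht0 : (0 : ℝ≥0∞) < ENNReal.ofReal s := ENNReal.ofReal_pos.2 hs.1
      have ht1 : ENNReal.ofReal s ≤ 1 := ENNReal.ofReal_le_one.2 hs.2
      have h1 := hρ _ (hsep_mem _ ht0 ht1)
      rw [tsum_subtype (Sep (ENNReal.ofReal s)) (fun x => (ρ x : ℝ≥0∞))] at h1
      have h2 : ∑' (v : T), F (v : V) s = ∑' (v : V), Set.indicator T (fun x => F x s) v :=
        tsum_subtype T (fun x => F x s)
      rw [h2]
      refine le_trans h1 (Summable.tsum_le_tsum (fun v => ?_) ENNReal.summable ENNReal.summable)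
      by_cases hv : v ∈ Sep (ENNReal.ofReal s)
      · rw [Set.indicator_of_mem hv]
        by_cases hρv : ρ v = 0
        · rw [hρv]
          simp
        · have hvT : v ∈ T := by
            simp only [hTdef, Function.mem_support]
            intro hc
            rcases mul_eq_zero.1 hc with hc1 | hc1
            · exact hρv (by exact_mod_cast hc1)
            · exact hSeplam _ v ht0 hv (by exact_mod_cast hc1)
          rw [Set.indicator_of_mem hvT, hF]
          have : Set.indicator {s' : ℝ | v ∈ Sep (ENNReal.ofReal s')} (fun _ => (1:ℝ≥0∞)) s = 1 :=
            Set.indicator_of_mem (show s ∈ {s' : ℝ | v ∈ Sep (ENNReal.ofReal s')} from hv) _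
          simp only [this, mul_one]
          exact le_rfl
      · rw [Set.indicator_of_notMem hv]
        exact zero_le
    have step2 : ∫⁻ s in Set.Ioc (0:ℝ) 1, ∑' (v : T), F (v : V) s
        = ∑' (v : T), ∫⁻ s in Set.Ioc (0:ℝ) 1, F (v : V) s :=
      MeasureTheory.lintegral_tsum fun v => (hFmeas v).aemeasurable
    have step3 : ∀ v : V, ∫⁻ s in Set.Ioc (0:ℝ) 1, F v s ≤ (ρ v : ℝ≥0∞) * (lam v : ℝ≥0∞) := by
      intro v
      rw [hF]
      rw [MeasureTheory.lintegral_const_mul _ (measurable_const.indicator (hIv_meas v))]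
      refine mul_le_mul_right ?_ _
      rw [MeasureTheory.lintegral_indicator (hIv_meas v)]
      rw [MeasureTheory.Measure.restrict_restrict (hIv_meas v)]
      simp only [MeasureTheory.lintegral_one, MeasureTheory.Measure.restrict_apply,
        MeasurableSet.univ, Set.univ_inter]
      exact hIv_vol v
    have step4 : ∑' (v : T), ((ρ (v : V) : ℝ≥0∞) * (lam (v : V) : ℝ≥0∞))
        ≤ ∑' v, (ρ v : ℝ≥0∞) * (lam v : ℝ≥0∞) := by
      rw [tsum_subtype T (fun v => (ρ v : ℝ≥0∞) * (lam v : ℝ≥0∞))]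
      exact Summable.tsum_le_tsum (fun v => Set.indicator_le_self _ _ v) ENNReal.summable ENNReal.summable
    calc (1 : ℝ≥0∞) ≤ ∫⁻ s in Set.Ioc (0:ℝ) 1, ∑' (v : T), F (v : V) s := step1
    _ = ∑' (v : T), ∫⁻ s in Set.Ioc (0:ℝ) 1, F (v : V) s := step2
    _ ≤ ∑' (v : T), ((ρ (v : V) : ℝ≥0∞) * (lam (v : V) : ℝ≥0∞)) :=
        Summable.tsum_le_tsum (fun v => step3 v) ENNReal.summable ENNReal.summable
    _ ≤ ∑' v, (ρ v : ℝ≥0∞) * (lam v : ℝ≥0∞) := step4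
  -- Cauchy–Schwarz
  have hCS : ∑' v, (ρ v : ℝ≥0∞) * (lam v : ℝ≥0∞)
      ≤ (vArea ρ) ^ ((1:ℝ)/2) * (vArea lam) ^ ((1:ℝ)/2) := by
    letI : MeasurableSpace V := ⊤
    haveI : MeasurableSingletonClass V := ⟨fun _ => trivial⟩
    have hconj : Real.HolderConjugate 2 2 := Real.holderConjugate_iff.mpr ⟨by norm_num, by norm_num⟩
    have h := ENNReal.lintegral_mul_le_Lp_mul_Lq (μ := MeasureTheory.Measure.count (α := V))
      hconj (f := fun v => (ρ v : ℝ≥0∞)) (g := fun v => (lam v : ℝ≥0∞))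
      (measurable_from_top (f := fun v => ((ρ v : NNReal) : ℝ≥0∞))).aemeasurable (measurable_from_top (f := fun v => ((lam v : NNReal) : ℝ≥0∞))).aemeasurable
    rw [MeasureTheory.lintegral_count] at h
    have e1 : ∀ x : ℝ≥0∞, x ^ (2:ℝ) = x ^ 2 := fun x => by
      rw [show (2:ℝ) = ((2:ℕ):ℝ) by norm_num, ENNReal.rpow_natCast]
    simp only [e1] at h
    rw [MeasureTheory.lintegral_count, MeasureTheory.lintegral_count] at h
    rw [vArea, vArea]
    exact le_trans (le_of_eq rfl) h
  -- conclude
  by_cases hltop : vArea lam = ⊤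
  · rw [hltop]
    simp
  by_cases hrtop : vArea ρ = ⊤
  · rw [hrtop]
    exact le_top
  have hl0 : vArea lam ≠ 0 := by
    intro hc
    have hall : ∀ v, (lam v : ℝ≥0∞) = 0 := by
      intro v
      have := ENNReal.tsum_eq_zero.1 hc v
      simpa using pow_eq_zero_iff (n := 2) (by norm_num) |>.1 this
    have : ∑' v, (ρ v : ℝ≥0∞) * (lam v : ℝ≥0∞) = 0 :=
      ENNReal.tsum_eq_zero.2 fun v => by rw [hall v, mul_zero]
    rw [this] at key
    simp at key
  have hr0 : vArea ρ ≠ 0 := by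
    intro hc
    have hall : ∀ v, (ρ v : ℝ≥0∞) = 0 := by
      intro v
      have := ENNReal.tsum_eq_zero.1 hc v
      simpa using pow_eq_zero_iff (n := 2) (by norm_num) |>.1 this
    have : ∑' v, (ρ v : ℝ≥0∞) * (lam v : ℝ≥0∞) = 0 :=
      ENNReal.tsum_eq_zero.2 fun v => by rw [hall v, zero_mul]
    rw [this] at key
    simp at key
  have hsq : (1 : ℝ≥0∞) ≤ vArea ρ * vArea lam := by
    have h1 : (1 : ℝ≥0∞) ≤ (vArea ρ) ^ ((1:ℝ)/2) * (vArea lam) ^ ((1:ℝ)/2) :=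
      le_trans key hCS
    have h2 : ((vArea ρ) ^ ((1:ℝ)/2) * (vArea lam) ^ ((1:ℝ)/2))
        * ((vArea ρ) ^ ((1:ℝ)/2) * (vArea lam) ^ ((1:ℝ)/2)) = vArea ρ * vArea lam := by
      rw [mul_mul_mul_comm, ← ENNReal.rpow_add _ _ hr0 hrtop, ← ENNReal.rpow_add _ _ hl0 hltop]
      norm_num
    calc (1 : ℝ≥0∞) = 1 * 1 := (one_mul 1).symm
    _ ≤ ((vArea ρ) ^ ((1:ℝ)/2) * (vArea lam) ^ ((1:ℝ)/2))
        * ((vArea ρ) ^ ((1:ℝ)/2) * (vArea lam) ^ ((1:ℝ)/2)) := mul_le_mul' h1 h1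
    _ = vArea ρ * vArea lam := h2
  calc (vArea lam)⁻¹ = (vArea lam)⁻¹ * 1 := (mul_one _).symm
  _ ≤ (vArea lam)⁻¹ * (vArea ρ * vArea lam) := mul_le_mul_right hsq _
  _ = vArea ρ * ((vArea lam)⁻¹ * vArea lam) := by ring
  _ = vArea ρ := by rw [ENNReal.inv_mul_cancel hl0 hltop, mul_one]

/-- Duality of vertex moduli: the modulus of the family of separating sets is
the reciprocal of the modulus of the family of connecting paths, i.e. it equals
`VEL(A, B)`. -/
theorem stmt15 (G : SimpleGraph V) (A B : Set V) (hA : A.Nonempty) (hB : B.Nonempty) :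
    MOD (separating G A B) = (MOD (pathsBetween G A B))⁻¹ := by
  apply le_antisymm
  · have key : ∀ (Γ₀ : Set (Set V)), Γ₀ ⊆ pathsBetween G A B → Γ₀.Finite →
        MOD (separating G A B) ≤ (MOD Γ₀)⁻¹ := by
      intro Γ₀ hsub hfin
      refine le_trans (MOD_mono ?_) (finite_duality Γ₀ hfin
        (fun γ hγ => pathsBetween_finite (hsub hγ))
        (fun γ hγ => pathsBetween_nonempty (hsub hγ)))
      intro S hS γ hγ
      exact hS γ (hsub hγ)
    have : MOD (separating G A B) ≤
        ⨅ (Γ₀ : Set (Set V)) (_ : Γ₀ ⊆ pathsBetween G A B) (_ : Γ₀.Finite), (MOD Γ₀)⁻¹ :=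
      le_iInf fun Γ₀ => le_iInf fun h1 => le_iInf fun h2 => key Γ₀ h1 h2
    refine this.trans ?_
    rw [ MOD_eq_iSup (pathsBetween G A B) (fun γ h => pathsBetween_finite h)]
    simp only [ENNReal.inv_iSup]
    exact le_rfl
  · have h2 : (MOD (pathsBetween G A B))⁻¹
        = ⨆ (lam : V → NNReal) (_ : Admissible (pathsBetween G A B) lam), (vArea lam)⁻¹ := by
      rw [ MOD_def ]
      simp only [ENNReal.inv_iInf]
    rw [ MOD_def (separating G A B), h2]
    exact le_iInf₂ fun ρ hρ => iSup₂_le fun lam hlam => pairing G A B hlam hρ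
end

section
/- Let D ⊂ ℂ be a closed disk and let τ(D) = ρ(D)/dist(0, D), where dist(0,D) > 0. If a Möbius transformation F fixes 0 and maps the complement of D onto the open unit disk U, then |F(∞)| = τ(D)/(1 + τ(D)). -/
open Metric Complex Set Topology

/-! Since `F 0 = 0` forces `b = 0`, `F z = a z / (c z + d)`. Outside the open disk
`|F z| ≤ 1`; inside, `|F z| < 1` is impossible, since `F z` would then also be the image of a
point outside the disk, against injectivity of `F`. By continuity `|a z| = |c z + d|` on `∂D`,
i.e. `∂D` is the Apollonius circle `|a| |z| = |c| |z + d/c|`, and for such a circle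
`|a| |centre| = |c| ρ(D)`. Hence `|F ∞| = |a / c| = ρ(D) / |centre| = τ / (1 + τ)`. -/

theorem IsClosed.compl_interior_subset_closure_diff_singleton {X : Type*} [TopologicalSpace X]
    [∀ x : X, (𝓝[≠] x).NeBot] {s : Set X} (hs : IsClosed s) (p : X) :
    (interior s)ᶜ ⊆ closure ((interior s)ᶜ \ {p}) := by
  rw [← closure_compl]
  calc closure sᶜ ⊆ closure (sᶜ \ {p}) :=
        closure_minimal ((dense_compl_singleton p).open_subset_closure_inter hs.isOpen_compl)
          isClosed_closure
    _ ⊆ closure (closure sᶜ \ {p}) := closure_mono (sdiff_subset_sdiff_left subset_closure)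

theorem mul_norm_eq_mul_radius_of_forall_mem_sphere {ctr q : ℂ} {r A C : ℝ} (hr : 0 < r)
    (hA : 0 ≤ A) (hC : 0 ≤ C) (hq : q ≠ 0) (h : ∀ z ∈ sphere ctr r, A * ‖z‖ = C * ‖z - q‖) :
    A * ‖ctr‖ = C * r := by
  have hsq : ∀ e : ℂ, ‖e‖ = 1 →
      A ^ 2 * normSq (ctr + r * e) = C ^ 2 * normSq (ctr + r * e - q) := by
    intro e he
    rw [← Complex.sq_norm, ← Complex.sq_norm, ← mul_pow, ← mul_pow,
      h _ (by simp [he, abs_of_pos hr])]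
  -- the points `ctr ± r` and `ctr ± r i`: differences locate the centre, sums give the radius
  have e1 := hsq 1 (by simp)
  have e2 := hsq I (by simp)
  have e3 := hsq (-1) (by simp)
  have e4 := hsq (-I) (by simp)
  simp only [normSq_apply, add_re, add_im, sub_re, sub_im, mul_re, mul_im, ofReal_re, ofReal_im,
    I_re, I_im, one_re, one_im, neg_re, neg_im] at e1 e2 e3 e4
  have hx : A ^ 2 * ctr.re = C ^ 2 * (ctr.re - q.re) :=
    mul_left_cancel₀ (by positivity : 4 * r ≠ 0) (by linear_combination e1 - e3)
  have hy : A ^ 2 * ctr.im = C ^ 2 * (ctr.im - q.im) :=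
    mul_left_cancel₀ (by positivity : 4 * r ≠ 0) (by linear_combination e2 - e4)
  have hs : A ^ 2 * (normSq ctr + r ^ 2) = C ^ 2 * (normSq (ctr - q) + r ^ 2) := by
    simp only [normSq_apply, sub_re, sub_im]
    linear_combination (e1 + e3) / 2
  have hprod : (C ^ 2 - A ^ 2) * (A ^ 2 * normSq ctr - C ^ 2 * r ^ 2) = 0 := by
    simp only [normSq_apply, sub_re, sub_im] at hs ⊢
    linear_combination C ^ 2 * hs - (A ^ 2 * ctr.re + C ^ 2 * (ctr.re - q.re)) * hx
      - (A ^ 2 * ctr.im + C ^ 2 * (ctr.im - q.im)) * hy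
  refine (sq_eq_sq₀ (by positivity) (by positivity)).mp ?_
  rw [mul_pow, mul_pow, Complex.sq_norm]
  rcases mul_eq_zero.mp hprod with hAC | hAC
  -- for `A = C` the locus would be a line, which forces `q = 0` unless `A = C = 0`
  · have hre : A ^ 2 * q.re = 0 := by linear_combination hx + (ctr.re - q.re) * hAC
    have him : A ^ 2 * q.im = 0 := by linear_combination hy + (ctr.im - q.im) * hAC
    have hA0 : A ^ 2 = 0 := by
      by_contra hA0
      exact hq (Complex.ext ((mul_eq_zero.mp hre).resolve_left hA0)
        ((mul_eq_zero.mp him).resolve_left hA0))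
    linear_combination (normSq ctr - r ^ 2) * hA0 - r ^ 2 * hAC
  · linear_combination hAC

section Mobius

variable {a c d : ℂ}

theorem mobius_ne_div (ha : a ≠ 0) (hc : c ≠ 0) (hd : d ≠ 0) (z : ℂ) :
    a * z / (c * z + d) ≠ a / c := by
  intro h
  by_cases hz : c * z + d = 0
  · rw [hz, div_zero, eq_comm, div_eq_zero_iff] at h
    tauto
  · rw [div_eq_div_iff hz hc] at h
    exact mul_ne_zero ha hd (by linear_combination -h)

theorem mobius_injOn (ha : a ≠ 0) (hd : d ≠ 0) :
    InjOn (fun z => a * z / (c * z + d)) {z | c * z + d ≠ 0} := by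
  intro z hz w hw h
  rw [div_eq_div_iff hz hw] at h
  exact mul_left_cancel₀ (mul_ne_zero ha hd) (by linear_combination h)

theorem norm_mul_le_norm_add_of_mapsTo {s : Set ℂ} (hs : IsClosed s) (hc : c ≠ 0)
    (h : MapsTo (fun z => a * z / (c * z + d)) (interior s)ᶜ (closedBall 0 1)) {z : ℂ}
    (hz : z ∉ interior s) : ‖a * z‖ ≤ ‖c * z + d‖ := by
  -- at the pole `-d / c` the junk value `x / 0 = 0` says nothing; continuity covers it
  have hpunct : (interior s)ᶜ \ {-d / c} ⊆ {z | ‖a * z‖ ≤ ‖c * z + d‖} := by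
    rintro z ⟨hzs, hzp⟩
    have hne : c * z + d ≠ 0 := fun h0 => hzp ((eq_div_iff hc).mpr (by linear_combination h0))
    have hle := h hzs
    rwa [mem_closedBall, dist_zero_right, norm_div, div_le_one (norm_pos_iff.mpr hne)] at hle
  exact closure_minimal hpunct (isClosed_le (by fun_prop) (by fun_prop))
    (hs.compl_interior_subset_closure_diff_singleton _ hz)

theorem norm_add_le_norm_mul_of_subset_image {s : Set ℂ} (ha : a ≠ 0) (hc : c ≠ 0) (hd : d ≠ 0)
    (h : closedBall 0 1 \ {a / c} ⊆ (fun z => a * z / (c * z + d)) '' sᶜ) (h0 : (0 : ℂ) ∉ s)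
    {z : ℂ} (hz : z ∈ closure s) : ‖c * z + d‖ ≤ ‖a * z‖ := by
  have hclosed : IsClosed {z : ℂ | ‖c * z + d‖ ≤ ‖a * z‖} :=
    isClosed_le (by fun_prop) (by fun_prop)
  refine closure_minimal (fun z hz => ?_) hclosed hz
  change ‖c * z + d‖ ≤ ‖a * z‖
  by_contra! hlt
  have hne : c * z + d ≠ 0 := norm_pos_iff.mp ((norm_nonneg _).trans_lt hlt)
  have hmem : a * z / (c * z + d) ∈ closedBall 0 1 \ {a / c} := by
    refine ⟨?_, mobius_ne_div ha hc hd z⟩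
    rw [mem_closedBall, dist_zero_right, norm_div, div_le_one (norm_pos_iff.mpr hne)]
    exact hlt.le
  obtain ⟨w, hw, hwz⟩ := h hmem
  by_cases hw0 : c * w + d = 0
  · simp only at hwz
    rw [hw0, div_zero, eq_comm, div_eq_zero_iff, mul_eq_zero] at hwz
    rcases hwz with (rfl | rfl) | hz0
    exacts [ha rfl, h0 hz, hne hz0]
  · exact hw (mobius_injOn ha hd hw0 hne hwz ▸ hz)

end Mobius

theorem stmt16_general (ctr : ℂ) (r : ℝ) (hr : 0 < r) (h0 : r < dist 0 ctr)
    (a b c d : ℂ) (hd : d ≠ 0)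
    (hF0 : (a * 0 + b) / (c * 0 + d) = 0)
    (himg : (fun z => (a * z + b) / (c * z + d)) ''
        {z : ℂ | z ∉ interior (closedBall ctr r)} =
      closedBall (0 : ℂ) 1 \ {a / c}) :
    ‖a / c‖ =
      (r / (dist 0 ctr - r)) / (1 + r / (dist 0 ctr - r)) := by
  obtain rfl : b = 0 := by simpa [hd] using hF0
  simp only [add_zero] at himg
  have hint : interior (closedBall ctr r) = ball ctr r := interior_closedBall ctr hr.ne'
  have h0ball : (0 : ℂ) ∉ interior (closedBall ctr r) := by
    rw [hint, mem_ball]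
    exact h0.not_gt
  -- `0 = F 0` lies in the image, which omits `a / c`
  obtain ⟨ha, hc⟩ : a ≠ 0 ∧ c ≠ 0 := by
    have h0img := himg ▸ mem_image_of_mem (fun z => a * z / (c * z + d)) h0ball
    simpa [eq_comm] using h0img.2
  have hsphere : ∀ z ∈ sphere ctr r, ‖a‖ * ‖z‖ = ‖c‖ * ‖z - -d / c‖ := by
    intro z hz
    have hout : z ∉ interior (closedBall ctr r) := by
      rw [hint, mem_ball, mem_sphere.mp hz]
      exact lt_irrefl r
    have hin : z ∈ closure (interior (closedBall ctr r)) := by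
      rw [hint, closure_ball ctr hr.ne']
      exact sphere_subset_closedBall hz
    rw [← norm_mul, ← norm_mul, mul_sub, mul_div_cancel₀ _ hc, sub_neg_eq_add]
    exact le_antisymm
      (norm_mul_le_norm_add_of_mapsTo isClosed_closedBall hc
        (fun z hz => (himg.subset (mem_image_of_mem _ hz)).1) hout)
      (norm_add_le_norm_mul_of_subset_image ha hc hd himg.ge h0ball hin)
  have hkey := mul_norm_eq_mul_radius_of_forall_mem_sphere hr (norm_nonneg a) (norm_nonneg c)
    (div_ne_zero (neg_ne_zero.mpr hd) hc) hsphere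
  rw [dist_zero_left] at h0 ⊢
  have hMr : ‖ctr‖ - r ≠ 0 := (sub_pos.mpr h0).ne'
  have hcn : ‖c‖ ≠ 0 := norm_ne_zero_iff.mpr hc
  have hM : ‖ctr‖ ≠ 0 := (hr.trans h0).ne'
  rw [norm_div, one_add_div hMr, sub_add_cancel, div_div_div_cancel_right₀ hMr,
    div_eq_div_iff hcn hM]
  linear_combination hkey

/-- Let `D = closedBall ctr r` be a closed disk not containing `0`, and let
`F z = (a z + b)/(c z + d)` be a Möbius transformation with `F 0 = 0` mapping
the complement of the interior of `D` (together with `∞ ↦ a/c`) onto the closed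
unit disk. Then `|F(∞)| = τ/(1 + τ)`, where `τ = ρ(D)/dist(0, D)`. -/
theorem stmt16 (ctr : ℂ) (r : ℝ) (hr : 0 < r) (h0 : r < dist 0 ctr)
    (a b c d : ℂ) (hdet : a * d - b * c ≠ 0) (hd : d ≠ 0)
    (hF0 : (a * 0 + b) / (c * 0 + d) = 0)
    (himg : (fun z => (a * z + b) / (c * z + d)) ''
        {z : ℂ | z ∉ interior (closedBall ctr r)} =
      closedBall (0 : ℂ) 1 \ {a / c}) :
    ‖a / c‖ =
      (r / (dist 0 ctr - r)) / (1 + r / (dist 0 ctr - r)) :=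
  stmt16_general ctr r hr h0 a b c d hd hF0 himg
end

section
/- Suppose three closed disks D_0, D_1, D_2 in ℂ pairwise intersect with dihedral angles Θ_{01}, Θ_{02}, Θ_{12} ∈ [0, π/2]. Then there is a unique point O equidistant (in the power-of-a-point sense) from all three circles — the center of the circle orthogonal to ∂D_0, ∂D_1, ∂D_2 — and O lies in the (closed) triangle formed by the centers A_0, A_1, A_2. -/
open Real

set_option maxHeartbeats 1000000 in
private lemma radical_main (a0 b0 a1 b1 a2 b2 f0 f1 f2 : ℝ)
    (hDne : (a1-a0)*(b2-b0)-(a2-a0)*(b1-b0) ≠ 0)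
    (hf0 : 0 ≤ f0) (hf1 : 0 ≤ f1) (hf2 : 0 ≤ f2)
    (hp0 : 0 ≤ (a0-a1)^2+(b0-b1)^2-f0-f1)
    (hq0 : 0 ≤ (a0-a2)^2+(b0-b2)^2-f0-f2)
    (hr0 : 0 ≤ (a1-a2)^2+(b1-b2)^2-f1-f2)
    (hp2 : (((a0-a1)^2+(b0-b1)^2-f0-f1)/2)^2 ≤ f0*f1)
    (hq2 : (((a0-a2)^2+(b0-b2)^2-f0-f2)/2)^2 ≤ f0*f2)
    (hr2 : (((a1-a2)^2+(b1-b2)^2-f1-f2)/2)^2 ≤ f1*f2) :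
    ∃ w0 w1 w2 px py : ℝ, 0 ≤ w0 ∧ 0 ≤ w1 ∧ 0 ≤ w2 ∧ w0+w1+w2 = 1 ∧
      px = w0*a0+w1*a1+w2*a2 ∧ py = w0*b0+w1*b1+w2*b2 ∧
      ((px-a1)^2+(py-b1)^2-f1 = (px-a0)^2+(py-b0)^2-f0) ∧
      ((px-a2)^2+(py-b2)^2-f2 = (px-a0)^2+(py-b0)^2-f0) ∧
      (∀ x y : ℝ, ((x-a1)^2+(y-b1)^2-f1 = (x-a0)^2+(y-b0)^2-f0) →
        ((x-a2)^2+(y-b2)^2-f2 = (x-a0)^2+(y-b0)^2-f0) → x = px ∧ y = py) := by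
  obtain ⟨p, hp⟩ : ∃ p : ℝ, p = ((a0-a1)^2+(b0-b1)^2-f0-f1)/2 := ⟨_, rfl⟩
  obtain ⟨q, hq⟩ : ∃ q : ℝ, q = ((a0-a2)^2+(b0-b2)^2-f0-f2)/2 := ⟨_, rfl⟩
  obtain ⟨r, hr⟩ : ∃ r : ℝ, r = ((a1-a2)^2+(b1-b2)^2-f1-f2)/2 := ⟨_, rfl⟩
  obtain ⟨N0, hN0⟩ : ∃ x : ℝ, x = f1*f2+f1*q+f2*p+p*r+q*r-r^2 := ⟨_, rfl⟩
  obtain ⟨N1, hN1⟩ : ∃ x : ℝ, x = f0*f2+f0*r+f2*p+q*p+q*r-q^2 := ⟨_, rfl⟩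
  obtain ⟨N2, hN2⟩ : ∃ x : ℝ, x = f0*f1+f0*r+f1*q+p*q+p*r-p^2 := ⟨_, rfl⟩
  obtain ⟨D, hD⟩ : ∃ x : ℝ, x = (a1-a0)*(b2-b0)-(a2-a0)*(b1-b0) := ⟨_, rfl⟩
  rw [← hD] at hDne
  have hD2 : D^2 ≠ 0 := pow_ne_zero _ hDne
  have hD2pos : 0 < D^2 := lt_of_le_of_ne (sq_nonneg _) (Ne.symm hD2)
  have hden : N0 + N1 + N2 = D^2 := by rw [hN0, hN1, hN2, hp, hq, hr, hD]; ring
  have I1 : -N0*(f0+p)+N1*(f1+p)+N2*(q-r) = 0 := by rw [hN0, hN1, hN2]; ring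
  have I2 : -N0*(f0+q)+N2*(f2+q)+N1*(p-r) = 0 := by rw [hN0, hN1, hN2]; ring
  obtain ⟨px, hpx⟩ : ∃ x : ℝ, x = (N0*a0+N1*a1+N2*a2)/D^2 := ⟨_, rfl⟩
  obtain ⟨py, hpy⟩ : ∃ x : ℝ, x = (N0*b0+N1*b1+N2*b2)/D^2 := ⟨_, rfl⟩
  have L1 : 2*((N0*a0+N1*a1+N2*a2)*(a1-a0) + (N0*b0+N1*b1+N2*b2)*(b1-b0))
      = (a1^2+b1^2-a0^2-b0^2+f0-f1) * D^2 := by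
    linear_combination 2*I1 + (a1^2+b1^2-a0^2-b0^2+f0-f1)*hden
      + (2*N0 - 2*N1)*hp - 2*N2*hq + 2*N2*hr
  have L2 : 2*((N0*a0+N1*a1+N2*a2)*(a2-a0) + (N0*b0+N1*b1+N2*b2)*(b2-b0))
      = (a2^2+b2^2-a0^2-b0^2+f0-f2) * D^2 := by
    linear_combination 2*I2 + (a2^2+b2^2-a0^2-b0^2+f0-f2)*hden
      + (2*N0 - 2*N2)*hq - 2*N1*hp + 2*N1*hr
  have hL1 : 2*(px*(a1-a0)+py*(b1-b0)) = a1^2+b1^2-a0^2-b0^2+f0-f1 := by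
    rw [hpx, hpy]; field_simp; linear_combination L1
  have hL2 : 2*(px*(a2-a0)+py*(b2-b0)) = a2^2+b2^2-a0^2-b0^2+f0-f2 := by
    rw [hpx, hpy]; field_simp; linear_combination L2
  -- nonnegativity of the numerators
  have hp' : 0 ≤ p := by rw [hp]; linarith
  have hq' : 0 ≤ q := by rw [hq]; linarith
  have hr' : 0 ≤ r := by rw [hr]; linarith
  have hpf : p^2 ≤ f0*f1 := by rw [hp]; exact hp2
  have hqf : q^2 ≤ f0*f2 := by rw [hq]; exact hq2
  have hrf : r^2 ≤ f1*f2 := by rw [hr]; exact hr2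
  have hN0' : 0 ≤ N0 := by
    rw [hN0]
    linarith [mul_nonneg hf1 hq', mul_nonneg hf2 hp', mul_nonneg hp' hr', mul_nonneg hq' hr', hrf, sq_nonneg r]
  have hN1' : 0 ≤ N1 := by
    rw [hN1]
    linarith [mul_nonneg hf0 hr', mul_nonneg hf2 hp', mul_nonneg hq' hp', mul_nonneg hq' hr', hqf, sq_nonneg q]
  have hN2' : 0 ≤ N2 := by
    rw [hN2]
    linarith [mul_nonneg hf0 hr', mul_nonneg hf1 hq', mul_nonneg hp' hq', mul_nonneg hp' hr', hpf, sq_nonneg p]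
  refine ⟨N0/D^2, N1/D^2, N2/D^2, px, py, by positivity, by positivity, by positivity,
    ?_, ?_, ?_, ?_, ?_, ?_⟩
  · field_simp; linarith [hden]
  · rw [hpx]; field_simp
  · rw [hpy]; field_simp
  · linear_combination -hL1
  · linear_combination -hL2
  · intro x y h1 h2
    have k1 : (x - px)*(a1-a0) + (y - py)*(b1-b0) = 0 := by
      linear_combination (-1/2)*h1 - (1/2)*hL1
    have k2 : (x - px)*(a2-a0) + (y - py)*(b2-b0) = 0 := by
      linear_combination (-1/2)*h2 - (1/2)*hL2
    have hx : (x - px) * D = 0 := by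
      rw [hD]; linear_combination (b2-b0)*k1 - (b1-b0)*k2
    have hy : (y - py) * D = 0 := by
      rw [hD]; linear_combination (a1-a0)*k2 - (a2-a0)*k1
    have hx0 := (mul_eq_zero.mp hx).resolve_right hDne
    have hy0 := (mul_eq_zero.mp hy).resolve_right hDne
    constructor <;> linarith

private lemma cos_sq_bound (x y c : ℝ) (hx : 0 < x) (hy : 0 < y)
    (h0 : 0 ≤ c) (h1 : c ≤ 1) : (x*y*c)^2 ≤ x^2*y^2 := by
  have hc2 : c^2 ≤ 1 := by nlinarith
  calc (x*y*c)^2 = (x*y)^2*c^2 := by ring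
    _ ≤ (x*y)^2*1 := mul_le_mul_of_nonneg_left hc2 (sq_nonneg _)
    _ = x^2*y^2 := by ring

/-- For three pairwise intersecting disks with noncollinear centers `A 0, A 1,
A 2`, radii `ρ i > 0`, and pairwise dihedral angles in `[0, π/2]` (law of
cosines for the center distances), there is a unique point `O` with equal power
with respect to the three circles (the center of the common orthogonal circle),
and it lies in the closed triangle spanned by the centers. -/
theorem stmt17 (A : Fin 3 → ℂ) (ρ : Fin 3 → ℝ) (θ : Fin 3 → Fin 3 → ℝ)
    (hρ : ∀ i, 0 < ρ i) (hnc : ¬Collinear ℝ (Set.range A))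
    (hθ : ∀ i j, i ≠ j → θ i j ∈ Set.Icc 0 (π / 2))
    (hlaw : ∀ i j, i ≠ j →
      dist (A i) (A j) ^ 2 = ρ i ^ 2 + ρ j ^ 2 + 2 * ρ i * ρ j * Real.cos (θ i j)) :
    (∃! O : ℂ, ∀ i j : Fin 3, dist O (A i) ^ 2 - ρ i ^ 2 = dist O (A j) ^ 2 - ρ j ^ 2) ∧
    (∀ O : ℂ, (∀ i j : Fin 3, dist O (A i) ^ 2 - ρ i ^ 2 = dist O (A j) ^ 2 - ρ j ^ 2) →
      O ∈ convexHull ℝ (Set.range A)) := by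
  have hdist : ∀ z w : ℂ, dist z w ^ 2 = (z.re - w.re)^2 + (z.im - w.im)^2 := by
    intro z w
    rw [Complex.dist_eq, Complex.sq_norm]
    simp [Complex.normSq_apply, Complex.sub_re, Complex.sub_im]
    ring
  -- the centers are affinely independent: cross product nonzero
  have hDne : ((A 1).re-(A 0).re)*((A 2).im-(A 0).im)
      - ((A 2).re-(A 0).re)*((A 1).im-(A 0).im) ≠ 0 := by
    intro hD0
    apply hnc
    rw [collinear_iff_exists_forall_eq_smul_vadd]
    by_cases h10 : A 1 = A 0
    · refine ⟨A 0, A 2 - A 0, ?_⟩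
      rintro _ ⟨i, rfl⟩
      fin_cases i
      · exact ⟨0, by simp⟩
      · exact ⟨0, by simp [h10]⟩
      · exact ⟨1, by simp⟩
    · refine ⟨A 0, A 1 - A 0, ?_⟩
      rintro _ ⟨i, rfl⟩
      fin_cases i
      · exact ⟨0, by simp⟩
      · exact ⟨1, by simp⟩
      · have hre : (A 1).re ≠ (A 0).re ∨ (A 1).im ≠ (A 0).im := by
          by_contra hc
          push_neg at hc
          exact h10 (Complex.ext hc.1 hc.2)
        have hn : ((A 1).re-(A 0).re)^2+((A 1).im-(A 0).im)^2 ≠ 0 := by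
          have : 0 < ((A 1).re-(A 0).re)^2+((A 1).im-(A 0).im)^2 := by
            rcases hre with h | h
            · have := pow_two_pos_of_ne_zero (sub_ne_zero.mpr h)
              linarith [sq_nonneg ((A 1).im-(A 0).im)]
            · have := pow_two_pos_of_ne_zero (sub_ne_zero.mpr h)
              linarith [sq_nonneg ((A 1).re-(A 0).re)]
          exact this.ne'
        refine ⟨(((A 2).re-(A 0).re)*((A 1).re-(A 0).re)
          + ((A 2).im-(A 0).im)*((A 1).im-(A 0).im))
          / (((A 1).re-(A 0).re)^2+((A 1).im-(A 0).im)^2), ?_⟩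
        have hre2 : ((A 2).re-(A 0).re)*(((A 1).re-(A 0).re)^2+((A 1).im-(A 0).im)^2)
            = (((A 2).re-(A 0).re)*((A 1).re-(A 0).re)
              + ((A 2).im-(A 0).im)*((A 1).im-(A 0).im))*((A 1).re-(A 0).re) := by
          linear_combination (-((A 1).im-(A 0).im)) * hD0
        have him2 : ((A 2).im-(A 0).im)*(((A 1).re-(A 0).re)^2+((A 1).im-(A 0).im)^2)
            = (((A 2).re-(A 0).re)*((A 1).re-(A 0).re)
              + ((A 2).im-(A 0).im)*((A 1).im-(A 0).im))*((A 1).im-(A 0).im) := by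
          linear_combination ((A 1).re-(A 0).re) * hD0
        show A 2 = _ • (A 1 - A 0) + A 0
        apply Complex.ext
        · rw [Complex.add_re, Complex.smul_re, Complex.sub_re]
          rw [smul_eq_mul, div_mul_eq_mul_div, div_add' _ _ _ hn, eq_div_iff hn]
          linear_combination hre2
        · rw [Complex.add_im, Complex.smul_im, Complex.sub_im]
          rw [smul_eq_mul, div_mul_eq_mul_div, div_add' _ _ _ hn, eq_div_iff hn]
          linear_combination him2
  -- bounds coming from the law of cosines
  have hcos : ∀ i j : Fin 3, i ≠ j → 0 ≤ Real.cos (θ i j) ∧ Real.cos (θ i j) ≤ 1 := by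
    intro i j hij
    obtain ⟨h1, h2⟩ := hθ i j hij
    have hpi : 0 < π := Real.pi_pos
    exact ⟨Real.cos_nonneg_of_mem_Icc ⟨by linarith, by linarith⟩, Real.cos_le_one _⟩
  have key : ∀ i j : Fin 3, i ≠ j →
      ((A i).re-(A j).re)^2+((A i).im-(A j).im)^2
        = ρ i ^2 + ρ j ^2 + 2*ρ i*ρ j*Real.cos (θ i j) := by
    intro i j hij
    rw [← hdist]
    exact hlaw i j hij
  have key01 := key 0 1 (by decide)
  have key02 := key 0 2 (by decide)
  have key12 := key 1 2 (by decide)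
  have hc01 := hcos 0 1 (by decide)
  have hc02 := hcos 0 2 (by decide)
  have hc12 := hcos 1 2 (by decide)
  have m01 : 0 ≤ ρ 0 * ρ 1 * Real.cos (θ 0 1) :=
    mul_nonneg (mul_nonneg (hρ 0).le (hρ 1).le) hc01.1
  have m02 : 0 ≤ ρ 0 * ρ 2 * Real.cos (θ 0 2) :=
    mul_nonneg (mul_nonneg (hρ 0).le (hρ 2).le) hc02.1
  have m12 : 0 ≤ ρ 1 * ρ 2 * Real.cos (θ 1 2) :=
    mul_nonneg (mul_nonneg (hρ 1).le (hρ 2).le) hc12.1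
  obtain ⟨w0, w1, w2, px, py, hw0, hw1, hw2, hwsum, hpx, hpy, e1, e2, huniq⟩ :=
    radical_main ((A 0).re) ((A 0).im) ((A 1).re) ((A 1).im) ((A 2).re) ((A 2).im)
      (ρ 0 ^2) (ρ 1 ^2) (ρ 2 ^2) hDne (by positivity) (by positivity) (by positivity)
      (by linarith) (by linarith) (by linarith)
      (by
        have heq : (((A 0).re-(A 1).re)^2+((A 0).im-(A 1).im)^2 - ρ 0^2 - ρ 1^2)/2
            = ρ 0 * ρ 1 * Real.cos (θ 0 1) := by linarith
        rw [heq]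
        exact cos_sq_bound _ _ _ (hρ 0) (hρ 1) hc01.1 hc01.2)
      (by
        have heq : (((A 0).re-(A 2).re)^2+((A 0).im-(A 2).im)^2 - ρ 0^2 - ρ 2^2)/2
            = ρ 0 * ρ 2 * Real.cos (θ 0 2) := by linarith
        rw [heq]
        exact cos_sq_bound _ _ _ (hρ 0) (hρ 2) hc02.1 hc02.2)
      (by
        have heq : (((A 1).re-(A 2).re)^2+((A 1).im-(A 2).im)^2 - ρ 1^2 - ρ 2^2)/2
            = ρ 1 * ρ 2 * Real.cos (θ 1 2) := by linarith
        rw [heq]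
        exact cos_sq_bound _ _ _ (hρ 1) (hρ 2) hc12.1 hc12.2)
  set P : ℂ := (px : ℂ) + (py : ℂ) * Complex.I with hP
  have hPre : P.re = px := by simp [hP]
  have hPim : P.im = py := by simp [hP]
  have g : ∀ i : Fin 3, dist P (A i)^2 - ρ i^2
      = (px - (A i).re)^2 + (py - (A i).im)^2 - ρ i^2 := by
    intro i
    rw [hdist, hPre, hPim]
  have g0 := g 0
  have g1 := g 1
  have g2 := g 2
  have hpowP : ∀ i j : Fin 3, dist P (A i) ^ 2 - ρ i ^ 2 = dist P (A j) ^ 2 - ρ j ^ 2 := by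
    set F : Fin 3 → ℝ := fun i => (px - (A i).re)^2 + (py - (A i).im)^2 - ρ i ^ 2 with hF
    have hFall : ∀ i : Fin 3, F i = F 0 := by
      intro i
      fin_cases i
      · rfl
      · exact e1
      · exact e2
    intro i j
    rw [g i, g j]
    show F i = F j
    rw [hFall i, hFall j]
  have huniqC : ∀ O : ℂ, (∀ i j : Fin 3, dist O (A i) ^ 2 - ρ i ^ 2
      = dist O (A j) ^ 2 - ρ j ^ 2) → O = P := by
    intro O hO
    have d1 := hO 1 0
    have d2 := hO 2 0
    rw [hdist, hdist] at d1 d2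
    obtain ⟨hx, hy⟩ := huniq O.re O.im d1 d2
    apply Complex.ext
    · rw [hx, hPre]
    · rw [hy, hPim]
  have hPmem : P ∈ convexHull ℝ (Set.range A) := by
    have hsum : ∑ i, (![w0, w1, w2] : Fin 3 → ℝ) i = 1 := by
      simp [Fin.sum_univ_three]
      linarith
    have hmem := Finset.centerMass_mem_convexHull (Finset.univ : Finset (Fin 3))
      (w := ![w0, w1, w2]) (fun i _ => by fin_cases i <;> simpa) (by rw [hsum]; norm_num)
      (fun i _ => Set.mem_range_self (f := A) i)
    have hPeq : P = Finset.univ.centerMass ![w0, w1, w2] A := by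
      rw [Finset.centerMass, hsum]
      rw [inv_one, one_smul]
      rw [Fin.sum_univ_three]
      apply Complex.ext
      · simp only [Complex.add_re, Complex.smul_re, Matrix.cons_val_zero, smul_eq_mul,
          Matrix.cons_val_one, Matrix.head_cons, Matrix.cons_val_two, Matrix.tail_cons, hPre]
        linarith [hpx]
      · simp only [Complex.add_im, Complex.smul_im, Matrix.cons_val_zero, smul_eq_mul,
          Matrix.cons_val_one, Matrix.head_cons, Matrix.cons_val_two, Matrix.tail_cons, hPim]
        linarith [hpy]
    rw [hPeq]
    exact hmem
  exact ⟨⟨P, hpowP, fun O hO => huniqC O hO⟩, fun O hO => by rw [huniqC O hO]; exact hPmem⟩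
end
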